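/- arXiv:1201.1099 — 2 statements merged into one kernel-verified Lean document; each statement's English description precedes it below -/
import Mathlib

section
/- Under the linear map ψ: R^{E ∪ E_0} → Q_n defined by ψ(e_{(ij)}) = e_{ij} + e_{ji} for (ij) ∈ E and ψ(e_{(0i)}) = q(i) for i ∈ V, every cut vector satisfies ψ(δ(S)) = 2c(S) for all S ⊆ V; in particular ψ(δ(V)) = 0. -/
lemma symmDiff_indicator_add_indicator_sub_indicator {R : Type*} [Ring R]
    (p q : Prop) [Decidable p] [Decidable q] :
    ((if (p ∧ ¬q) ∨ (q ∧ ¬p) then 1 else 0 : R) + (if p then 1 else 0) - (if q then 1 else 0)) =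
      2 * if p ∧ ¬q then 1 else 0 := by
  by_cases hp : p <;> by_cases hq : q <;> norm_num [hp, hq]

/-- A vector of R^{E ∪ E_0} is modelled by its symmetric V-part d together with its E_0-part x0. -/
theorem stmt16 {V : Type*} [Fintype V] [DecidableEq V]
    (ψ : (V → V → ℝ) → (V → ℝ) → V → V → ℝ)
    (hψ : ∀ (d : V → V → ℝ) (x0 : V → ℝ) (i j : V),
      ψ d x0 i j = if i = j then 0 else d i j + x0 i - x0 j)
    (δV : Finset V → V → V → ℝ)
    (hδV : ∀ S i j, δV S i j =
      if (i ∈ S ∧ j ∉ S) ∨ (j ∈ S ∧ i ∉ S) then 1 else 0)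
    (δ0 : Finset V → V → ℝ)
    (hδ0 : ∀ S i, δ0 S i = if i ∈ S then 1 else 0)
    (c : Finset V → V → V → ℝ)
    (hc : ∀ S i j, c S i j = if i ∈ S ∧ j ∉ S then 1 else 0) :
    (∀ S : Finset V, ∀ i j, ψ (δV S) (δ0 S) i j = 2 * c S i j) ∧
    (∀ i j, ψ (δV Finset.univ) (δ0 Finset.univ) i j = 0) := by
  have hcut : ∀ (S : Finset V) i j, ψ (δV S) (δ0 S) i j = 2 * c S i j := by
    intro S i j
    rw [hψ, hδV, hδ0, hδ0, hc]
    by_cases hij : i = j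
    · simp [hij]
    · rw [if_neg hij, symmDiff_indicator_add_indicator_sub_indicator]
  exact ⟨hcut, fun i j => by simp [hcut, hc]⟩
end

section
/- The vector g(ij) := (e_{ij} + e_{ji}) + (1/n)(q(i) - q(j)) lies in the space Q_n, and differs from 2e_{ij} by a linear combination of characteristic vectors of bitriangles: 2e_{ij} - (1/n) ∑_{k ∈ V−{i,j}} f^{T(ijk)} = g(ij). -/
/-!
Writing `q(m) = ∑ₓ (e_{mx} - e_{xm})`, the bitriangle vectors through the arc `ij` sum to
`∑ₘ f^{T(ijm)} = n (e_{ij} - e_{ji}) + q(j) - q(i)`, where the terms `m = i, j` may be included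
because a bitriangle with a repeated vertex vanishes. Rearranging gives `g(ij)`, which is the
symmetric vector `e_{ij} + e_{ji}` plus the potential difference of `w = (δ_i - δ_j) / n`.
-/

open Finset

section

variable {V : Type*} [DecidableEq V]

def arcVector (a b k l : V) : ℝ := if k = a ∧ l = b then 1 else 0

def cutVector (m k l : V) : ℝ :=
  if k = m ∧ l ≠ m then 1 else if l = m ∧ k ≠ m then -1 else 0

def bitriangleVector (a b c k l : V) : ℝ :=
  (arcVector a b k l + arcVector b c k l + arcVector c a k l) -
    (arcVector b a k l + arcVector c b k l + arcVector a c k l)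

lemma arcVector_swap (a b k l : V) : arcVector a b k l = arcVector b a l k := by
  simp only [arcVector, and_comm]

lemma cutVector_apply (m k l : V) :
    cutVector m k l = (if k = m then 1 else 0) - (if l = m then 1 else 0) := by
  unfold cutVector
  by_cases hk : k = m <;> by_cases hl : l = m <;> simp [hk, hl]

lemma bitriangleVector_left (a b k l : V) : bitriangleVector a b a k l = 0 := by
  unfold bitriangleVector; ring

lemma bitriangleVector_right (a b k l : V) : bitriangleVector a b b k l = 0 := by
  unfold bitriangleVector; ring

variable [Fintype V]

lemma sum_arcVector_left (a k l : V) : ∑ m, arcVector a m k l = if k = a then 1 else 0 := by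
  by_cases hk : k = a <;> simp [arcVector, hk]

lemma sum_arcVector_right (a k l : V) : ∑ m, arcVector m a k l = if l = a then 1 else 0 := by
  by_cases hl : l = a <;> simp [arcVector, hl, and_comm]

lemma sum_bitriangleVector (a b k l : V) :
    ∑ m, bitriangleVector a b m k l =
      Fintype.card V * (arcVector a b k l - arcVector b a k l)
        + cutVector b k l - cutVector a k l := by
  calc ∑ m, bitriangleVector a b m k l
      = ∑ m, ((arcVector a b k l - arcVector b a k l)
          + (arcVector b m k l - arcVector m b k l)
          - (arcVector a m k l - arcVector m a k l)) :=
        sum_congr rfl fun m _ => by unfold bitriangleVector; ring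
    _ = _ := by
        simp only [sum_sub_distrib, sum_add_distrib, sum_const, card_univ, nsmul_eq_mul,
          sum_arcVector_left, sum_arcVector_right, cutVector_apply]
        ring

lemma sum_sdiff_bitriangleVector (a b k l : V) :
    ∑ m ∈ univ \ {a, b}, bitriangleVector a b m k l = ∑ m, bitriangleVector a b m k l := by
  refine sum_subset (subset_univ _) fun m _ hm => ?_
  obtain rfl | rfl : m = a ∨ m = b := by simpa [or_iff_not_imp_left] using hm
  · exact bitriangleVector_left _ _ _ _
  · exact bitriangleVector_right _ _ _ _

end

theorem stmt19_general {V : Type*} [Fintype V] [DecidableEq V]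
    (n : ℕ) (hn : Fintype.card V = n)
    (i j : V)
    (e : V → V → V → V → ℝ)
    (he : ∀ a b k l, e a b k l = if k = a ∧ l = b then 1 else 0)
    (q : V → V → V → ℝ)
    (hq : ∀ m k l, q m k l =
      if k = m ∧ l ≠ m then 1 else if l = m ∧ k ≠ m then -1 else 0)
    (fT : V → V → V → V → V → ℝ)
    (hfT : ∀ a b c k l, fT a b c k l =
      (e a b k l + e b c k l + e c a k l) - (e b a k l + e c b k l + e a c k l))
    (gij : V → V → ℝ)
    (hgij : ∀ k l, gij k l =
      (e i j k l + e j i k l) + (1 / (n : ℝ)) * (q i k l - q j k l)) :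
    (∃ (s : V → V → ℝ) (w : V → ℝ), (∀ k l, s k l = s l k) ∧
      ∀ k l, k ≠ l → gij k l = s k l + w k - w l) ∧
    (∀ k l, 2 * e i j k l
        - (1 / (n : ℝ)) * ∑ m ∈ Finset.univ \ {i, j}, fT i j m k l
      = gij k l) := by
  obtain rfl : e = arcVector := funext fun a => funext fun b => funext fun k => funext (he a b k)
  obtain rfl : q = cutVector := funext fun m => funext fun k => funext (hq m k)
  obtain rfl : fT = bitriangleVector :=
    funext fun a => funext fun b => funext fun c => funext fun k => funext (hfT a b c k)
  have hn0 : (n : ℝ) ≠ 0 := by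
    rw [← hn]
    exact_mod_cast (Fintype.card_pos_iff.mpr ⟨i⟩).ne'
  refine ⟨⟨fun k l => arcVector i j k l + arcVector j i k l,
    fun m => (1 / (n : ℝ)) * ((if m = i then 1 else 0) - if m = j then 1 else 0),
    fun k l => ?_, fun k l _ => ?_⟩, fun k l => ?_⟩
  · dsimp only
    rw [arcVector_swap i j k l, arcVector_swap j i k l, add_comm]
  · rw [hgij, cutVector_apply, cutVector_apply]
    ring
  · rw [sum_sdiff_bitriangleVector, sum_bitriangleVector, hn, hgij]
    field_simp
    ring

/-- The canonical representative g(ij) = (e_{ij}+e_{ji}) + (1/n)(q(i)-q(j))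
of the non-negativity facet vector lies in Q_n and equals
2e_{ij} - (1/n) ∑_{k ∉ {i,j}} f^{T(ijk)}. -/
theorem stmt19 {V : Type*} [Fintype V] [DecidableEq V]
    (n : ℕ) (hn : Fintype.card V = n) (h3 : 3 ≤ n)
    (i j : V) (hij : i ≠ j)
    (e : V → V → V → V → ℝ)
    (he : ∀ a b k l, e a b k l = if k = a ∧ l = b then 1 else 0)
    (q : V → V → V → ℝ)
    (hq : ∀ m k l, q m k l =
      if k = m ∧ l ≠ m then 1 else if l = m ∧ k ≠ m then -1 else 0)
    (fT : V → V → V → V → V → ℝ)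
    (hfT : ∀ a b c k l, fT a b c k l =
      (e a b k l + e b c k l + e c a k l) - (e b a k l + e c b k l + e a c k l))
    (gij : V → V → ℝ)
    (hgij : ∀ k l, gij k l =
      (e i j k l + e j i k l) + (1 / (n : ℝ)) * (q i k l - q j k l)) :
    (∃ (s : V → V → ℝ) (w : V → ℝ), (∀ k l, s k l = s l k) ∧
      ∀ k l, k ≠ l → gij k l = s k l + w k - w l) ∧
    (∀ k l, 2 * e i j k l
        - (1 / (n : ℝ)) * ∑ m ∈ Finset.univ \ {i, j}, fT i j m k l
      = gij k l) :=
  stmt19_general n hn i j e he q hq fT hfT gij hgij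
end
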